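/- The curve CL1 defined by Q1(x,y,z) = (x^2+y^2-25z^2)(x-4z)(x+4z)(3x+4y)(x+3z)(6x+y+21z)(y+3z) has exactly 6 ordinary double points, 3 ordinary triple points, and 2 ordinary quadruple points, and no singular points of multiplicity at least 5. -/

import Mathlib

open MvPolynomial

noncomputable def conic : MvPolynomial (Fin 3) ℂ :=
  X 0 ^ 2 + X 1 ^ 2 - 25 * X 2 ^ 2

/-- The seven irreducible components of CL1: the smooth conic and six lines. -/
noncomputable def comps1 : Fin 7 → MvPolynomial (Fin 3) ℂ :=
  ![conic, X 0 - 4 * X 2, X 0 + 4 * X 2, 3 * X 0 + 4 * X 1, X 0 + 3 * X 2,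
    6 * X 0 + X 1 + 21 * X 2, X 1 + 3 * X 2]

/-- The number of components of CL1 passing through a projective point. -/
noncomputable def mult1 (p : Projectivization ℂ (Fin 3 → ℂ)) : ℕ :=
  (Finset.univ.filter fun i : Fin 7 => eval p.rep (comps1 i) = 0).card

/-- Gradient of a polynomial at a point. -/
noncomputable def grad (f : MvPolynomial (Fin 3) ℂ) (p : Fin 3 → ℂ) : Fin 3 → ℂ :=
  fun k => eval p (pderiv k f)


/-!
Every point on two components is one of eleven explicit nodes. Two distinct lines meet only at
the point given by the cross product of their coefficient vectors. Each line `ℓ` of the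
arrangement passes through two nodes `P`, `P'` of the conic `q = 0` with `polar q P P' ≠ 0`;
since `ℓ = span (P, P')` and `q (a • P + b • P') = a * b * polar q P P'`, the conic meets `ℓ`
only at `P` and `P'`. The same nondegeneracy gives transversality: at `v ∈ ℓ` the differential
`polar q v` of `q` cannot vanish at both `P` and `P'`, while `ℓ` does. The multiplicities are
then read off the incidence table of the eleven nodes.
-/

open Matrix

namespace Projectivization

variable {F : Type*} [Field F]

theorem mk_crossProduct_eq_mk_of_dotProduct_eq_zero {ℓ m v : Fin 3 → F} (hℓm : ℓ ⨯₃ m ≠ 0)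
    (hv : v ≠ 0) (hℓ : ℓ ⬝ᵥ v = 0) (hm : m ⬝ᵥ v = 0) :
    mk F (ℓ ⨯₃ m) hℓm = mk F v hv := by
  rw [mk_eq_mk_iff_crossProduct_eq_zero, cross_cross_eq_smul_sub_smul, hℓ, hm, zero_smul,
    zero_smul, sub_zero]

theorem mk_eq_mk_of_dotProduct_eq_zero {ℓ m v w : Fin 3 → F} (hℓm : ℓ ⨯₃ m ≠ 0)
    (hv : v ≠ 0) (hw : w ≠ 0) (hvℓ : ℓ ⬝ᵥ v = 0) (hvm : m ⬝ᵥ v = 0) (hwℓ : ℓ ⬝ᵥ w = 0)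
    (hwm : m ⬝ᵥ w = 0) : mk F v hv = mk F w hw := by
  rw [← mk_crossProduct_eq_mk_of_dotProduct_eq_zero hℓm hv hvℓ hvm,
    mk_crossProduct_eq_mk_of_dotProduct_eq_zero hℓm hw hwℓ hwm]

end Projectivization

section

variable {F : Type*} [Field F]

theorem exists_smul_eq_smul_add_smul_of_dotProduct_eq_zero {ℓ P P' v : Fin 3 → F} (hℓ : ℓ ≠ 0)
    (hPP' : P ⨯₃ P' ≠ 0) (hP : ℓ ⬝ᵥ P = 0) (hP' : ℓ ⬝ᵥ P' = 0) (hv : ℓ ⬝ᵥ v = 0) :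
    ∃ c a b : F, c ≠ 0 ∧ c • v = a • P + b • P' := by
  set n := P ⨯₃ P'
  have hnℓ : n ⨯₃ ℓ = 0 := by
    rw [cross_cross_eq_smul_sub_smul, dotProduct_comm, hP, dotProduct_comm, hP', zero_smul,
      zero_smul, sub_zero]
  have hnv : n ⬝ᵥ v = 0 := by
    have := cross_cross_eq_smul_sub_smul n ℓ v
    rw [hnℓ, map_zero, LinearMap.zero_apply, hv, zero_smul, sub_zero, eq_comm,
      smul_eq_zero] at this
    exact this.resolve_right hℓ
  obtain ⟨w, hw⟩ : ∃ w, n ⬝ᵥ w ≠ 0 := by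
    by_contra! h
    exact hPP' (dotProduct_eq_zero_iff.1 h)
  -- expanding `n ⨯₃ (v ⨯₃ w)` in two ways puts `(n ⬝ᵥ w) • v` in the span of `P` and `P'`
  refine ⟨n ⬝ᵥ w, -(P' ⬝ᵥ v ⨯₃ w), P ⬝ᵥ v ⨯₃ w, hw, ?_⟩
  have h1 := cross_cross_eq_smul_sub_smul' n v w
  have h2 := cross_cross_eq_smul_sub_smul P P' (v ⨯₃ w)
  rw [dotProduct_comm v, hnv, zero_smul, sub_zero] at h1
  rw [← h1, h2, neg_smul, sub_eq_add_neg, add_comm]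

theorem linearIndependent_pair_of_dotProduct {m : Type*} [Fintype m] {a b r : m → F}
    (hb : b ≠ 0) (har : a ⬝ᵥ r ≠ 0) (hbr : b ⬝ᵥ r = 0) : LinearIndependent F ![a, b] := by
  rw [LinearIndependent.pair_iff]
  intro s t hst
  have hs : s = 0 := by
    have := congrArg (· ⬝ᵥ r) hst
    simp only [add_dotProduct, smul_dotProduct, hbr, smul_eq_mul, mul_zero, add_zero,
      zero_dotProduct] at this
    exact (mul_eq_zero.1 this).resolve_right har
  subst hs
  rw [zero_smul, zero_add, smul_eq_zero] at hst
  exact ⟨rfl, hst.resolve_right hb⟩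

structure IsSecantLine (q : QuadraticForm F (Fin 3 → F)) (ℓ P P' : Fin 3 → F) : Prop where
  ne_zero : ℓ ≠ 0
  dotProduct_left : ℓ ⬝ᵥ P = 0
  dotProduct_right : ℓ ⬝ᵥ P' = 0
  isotropic_left : q P = 0
  isotropic_right : q P' = 0
  polar_ne_zero : QuadraticMap.polar q P P' ≠ 0

namespace IsSecantLine

variable {q : QuadraticForm F (Fin 3 → F)} {ℓ P P' v : Fin 3 → F}

theorem left_ne_zero (h : IsSecantLine q ℓ P P') : P ≠ 0 := by
  rintro rfl
  exact h.polar_ne_zero (QuadraticMap.polar_zero_left _ _)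

theorem right_ne_zero (h : IsSecantLine q ℓ P P') : P' ≠ 0 := by
  rintro rfl
  exact h.polar_ne_zero (QuadraticMap.polar_zero_right _ _)

theorem crossProduct_ne_zero (h : IsSecantLine q ℓ P P') : P ⨯₃ P' ≠ 0 := by
  rw [crossProduct_ne_zero_iff_linearIndependent, LinearIndependent.pair_iff' h.left_ne_zero]
  rintro a rfl
  apply h.polar_ne_zero
  rw [QuadraticMap.polar_smul_right, QuadraticMap.polar_self, h.isotropic_left, smul_zero,
    smul_zero]

theorem exists_smul_eq (h : IsSecantLine q ℓ P P') (hv : ℓ ⬝ᵥ v = 0) :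
    ∃ c a b : F, c ≠ 0 ∧ c • v = a • P + b • P' :=
  exists_smul_eq_smul_add_smul_of_dotProduct_eq_zero h.ne_zero h.crossProduct_ne_zero
    h.dotProduct_left h.dotProduct_right hv

theorem polar_ne_zero_or (h : IsSecantLine q ℓ P P') (hv : v ≠ 0) (hℓv : ℓ ⬝ᵥ v = 0) :
    QuadraticMap.polar q v P ≠ 0 ∨ QuadraticMap.polar q v P' ≠ 0 := by
  obtain ⟨c, a, b, hc, hcv⟩ := h.exists_smul_eq hℓv
  by_contra! hpolar
  have hb : b = 0 := by
    have := congrArg (QuadraticMap.polar q · P) hcv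
    simp only [QuadraticMap.polar_smul_left, QuadraticMap.polar_add_left, hpolar.1,
      QuadraticMap.polar_self, h.isotropic_left, QuadraticMap.polar_comm q P' P] at this
    simpa [h.polar_ne_zero] using this.symm
  have ha : a = 0 := by
    have := congrArg (QuadraticMap.polar q · P') hcv
    simp only [QuadraticMap.polar_smul_left, QuadraticMap.polar_add_left, hpolar.2,
      QuadraticMap.polar_self, h.isotropic_right] at this
    simpa [h.polar_ne_zero] using this.symm
  rw [ha, hb, zero_smul, zero_smul, add_zero, smul_eq_zero] at hcv
  exact hcv.elim hc hv

theorem mk_eq_or_mk_eq (h : IsSecantLine q ℓ P P') (hv : v ≠ 0) (hℓv : ℓ ⬝ᵥ v = 0)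
    (hqv : q v = 0) :
    Projectivization.mk F v hv = .mk F P h.left_ne_zero ∨
      Projectivization.mk F v hv = .mk F P' h.right_ne_zero := by
  obtain ⟨c, a, b, hc, hcv⟩ := h.exists_smul_eq hℓv
  have hab : a * b = 0 := by
    have := congrArg q hcv
    rw [QuadraticMap.map_smul, hqv, smul_zero, QuadraticMap.map_add q, QuadraticMap.map_smul,
      QuadraticMap.map_smul, h.isotropic_left, h.isotropic_right, QuadraticMap.polar_smul_left,
      QuadraticMap.polar_smul_right] at this
    simpa [h.polar_ne_zero] using this.symm
  simp only [Projectivization.mk_eq_mk_iff']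
  rcases mul_eq_zero.1 hab with rfl | rfl
  · refine .inr ⟨c⁻¹ * b, ?_⟩
    rw [mul_smul, ← zero_add (b • P'), ← zero_smul F P, ← hcv, inv_smul_smul₀ hc]
  · refine .inl ⟨c⁻¹ * a, ?_⟩
    rw [mul_smul, ← add_zero (a • P), ← zero_smul F P', ← hcv, inv_smul_smul₀ hc]

end IsSecantLine

end

open Finset

@[simp]
theorem Derivation.map_ofNat {R A M : Type*} [CommSemiring R] [CommSemiring A] [Algebra R A]
    [AddCommMonoid M] [Module A M] [Module R M] (D : Derivation R A M) (n : ℕ) [n.AtLeastTwo] :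
    D (ofNat(n) : A) = 0 := by
  rw [← Nat.cast_ofNat, D.map_natCast]

noncomputable def conicForm : QuadraticForm ℂ (Fin 3 → ℂ) :=
  QuadraticMap.weightedSumSquares ℂ ![(1 : ℂ), 1, -25]

def lineCoeffs : Fin 6 → Fin 3 → ℂ :=
  ![![1, 0, -4], ![1, 0, 4], ![3, 4, 0], ![1, 0, 3], ![6, 1, 21], ![0, 1, 3]]

theorem polar_conicForm (v w : Fin 3 → ℂ) :
    QuadraticMap.polar conicForm v w = 2 * (v 0 * w 0 + v 1 * w 1 - 25 * (v 2 * w 2)) := by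
  simp [QuadraticMap.polar, conicForm, QuadraticMap.weightedSumSquares_apply, Fin.sum_univ_three]
  ring

theorem eval_comps1_zero (v : Fin 3 → ℂ) : eval v (comps1 0) = conicForm v := by
  simp [comps1, conic, conicForm, QuadraticMap.weightedSumSquares_apply, Fin.sum_univ_three]
  ring

theorem eval_comps1_succ (i : Fin 6) (v : Fin 3 → ℂ) :
    eval v (comps1 i.succ) = lineCoeffs i ⬝ᵥ v := by
  fin_cases i <;> simp [comps1, lineCoeffs, dotProduct, Fin.sum_univ_three, sub_eq_add_neg]

theorem grad_comps1_zero_dotProduct (v r : Fin 3 → ℂ) :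
    grad (comps1 0) v ⬝ᵥ r = QuadraticMap.polar conicForm v r := by
  simp [polar_conicForm, comps1, conic, grad, dotProduct, Fin.sum_univ_three]
  ring

theorem grad_comps1_succ (i : Fin 6) (v : Fin 3 → ℂ) : grad (comps1 i.succ) v = lineCoeffs i := by
  ext k
  fin_cases i <;> fin_cases k <;> simp [comps1, lineCoeffs, grad]

theorem eval_comps1_smul_eq_zero_iff {c : ℂ} (hc : c ≠ 0) (i : Fin 7) (v : Fin 3 → ℂ) :
    eval (c • v) (comps1 i) = 0 ↔ eval v (comps1 i) = 0 := by
  induction i using Fin.cases with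
  | zero => simp [eval_comps1_zero, QuadraticMap.map_smul, hc]
  | succ i => simp [eval_comps1_succ, dotProduct_smul, hc]

theorem mult1_mk {v : Fin 3 → ℂ} (hv : v ≠ 0) :
    mult1 (Projectivization.mk ℂ v hv) = #{i | eval v (comps1 i) = 0} := by
  obtain ⟨a, ha⟩ := (Projectivization.mk_eq_mk_iff ℂ _ _ (Projectivization.rep_nonzero _) hv).1
    (Projectivization.mk_rep _)
  refine congrArg Finset.card (Finset.filter_congr fun i _ => ?_)
  rw [← ha, Units.smul_def, eval_comps1_smul_eq_zero_iff a.ne_zero]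

theorem lineCoeffs_ne_zero (i : Fin 6) : lineCoeffs i ≠ 0 := by
  fin_cases i <;> simp [lineCoeffs, ← List.ofFn_inj]

theorem lineCoeffs_crossProduct_ne_zero {i j : Fin 6} (hij : i ≠ j) :
    lineCoeffs i ⨯₃ lineCoeffs j ≠ 0 := by
  fin_cases i <;> fin_cases j <;> simp [lineCoeffs, cross_apply, ← List.ofFn_inj] at hij ⊢ <;>
    norm_num

def nodes : Fin 11 → Fin 3 → ℂ :=
  ![![4, -3, 1], ![-4, 3, 1], ![0, 1, 0], ![-4, -3, 1], ![-3, -3, 1], ![4, 3, 1], ![4, -45, 1],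
    ![-12, 9, 4], ![-3, 4, 1], ![-3, -4, 1], ![-104, -153, 37]]

def nodeComps : Fin 11 → Finset (Fin 7) :=
  ![{0, 1, 3, 6}, {0, 2, 3, 5}, {1, 2, 4}, {0, 2, 6}, {4, 5, 6}, {0, 1}, {1, 5}, {3, 4}, {0, 4},
    {0, 4}, {0, 5}]

theorem nodes_ne_zero (k : Fin 11) : nodes k ≠ 0 := by
  fin_cases k <;> simp [nodes, ← List.ofFn_inj]

noncomputable def node (k : Fin 11) : Projectivization ℂ (Fin 3 → ℂ) :=
  .mk ℂ (nodes k) (nodes_ne_zero k)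

theorem eval_comps1_nodes_eq_zero_iff (k : Fin 11) (i : Fin 7) :
    eval (nodes k) (comps1 i) = 0 ↔ i ∈ nodeComps k := by
  fin_cases k <;> fin_cases i <;> simp [nodes, nodeComps, comps1, conic] <;> norm_num

theorem mult1_node (k : Fin 11) : mult1 (node k) = #(nodeComps k) := by
  rw [node, mult1_mk]
  congr 1
  ext i
  simp [eval_comps1_nodes_eq_zero_iff]

theorem node_injective : Function.Injective node := by
  intro k l hkl
  by_contra hne
  have hcross : nodes k ⨯₃ nodes l ≠ 0 := by
    fin_cases k <;> fin_cases l <;> simp [nodes, cross_apply, ← List.ofFn_inj] at hne ⊢ <;>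
      norm_num
  exact hcross ((Projectivization.mk_eq_mk_iff_crossProduct_eq_zero _ _).1 hkl)

theorem polar_conicForm_nodes_ne_zero {k l : Fin 11} (hkl : k ≠ l) (hk : 0 ∈ nodeComps k)
    (hl : 0 ∈ nodeComps l) : QuadraticMap.polar conicForm (nodes k) (nodes l) ≠ 0 := by
  rw [polar_conicForm]
  fin_cases k <;> fin_cases l <;>
    first
    | exact absurd hk (by decide)
    | exact absurd hl (by decide)
    | exact absurd rfl hkl
    | norm_num [nodes, cons_val_two, tail_cons, head_cons]

theorem exists_isSecantLine_lineCoeffs (i : Fin 6) :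
    ∃ k l, IsSecantLine conicForm (lineCoeffs i) (nodes k) (nodes l) := by
  obtain ⟨k, l, hkl, hk0, hk, hl0, hl⟩ : ∃ k l, k ≠ l ∧ 0 ∈ nodeComps k ∧ i.succ ∈ nodeComps k ∧
      0 ∈ nodeComps l ∧ i.succ ∈ nodeComps l := by
    revert i; decide
  refine ⟨k, l, lineCoeffs_ne_zero i, ?_, ?_, ?_, ?_, polar_conicForm_nodes_ne_zero hkl hk0 hl0⟩
  · rwa [← eval_comps1_succ, eval_comps1_nodes_eq_zero_iff]
  · rwa [← eval_comps1_succ, eval_comps1_nodes_eq_zero_iff]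
  · rwa [← eval_comps1_zero, eval_comps1_nodes_eq_zero_iff]
  · rwa [← eval_comps1_zero, eval_comps1_nodes_eq_zero_iff]

theorem exists_node_eq_mk {v : Fin 3 → ℂ} (hv : v ≠ 0) {i j : Fin 7} (hij : i ≠ j)
    (hi : eval v (comps1 i) = 0) (hj : eval v (comps1 j) = 0) :
    ∃ k, Projectivization.mk ℂ v hv = node k := by
  wlog hlt : i < j generalizing i j
  · exact this hij.symm hj hi (lt_of_le_of_ne (not_lt.1 hlt) hij.symm)
  induction j using Fin.cases with
  | zero => exact absurd hlt (Fin.not_lt_zero i)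
  | succ j =>
    rw [eval_comps1_succ] at hj
    induction i using Fin.cases with
    | zero =>
      obtain ⟨k, l, hsec⟩ := exists_isSecantLine_lineCoeffs j
      rw [eval_comps1_zero] at hi
      exact (hsec.mk_eq_or_mk_eq hv hj hi).elim (⟨k, ·⟩) (⟨l, ·⟩)
    | succ i =>
      have hij' : i ≠ j := fun h => hij (congrArg Fin.succ h)
      have hmeet : ∀ i j : Fin 6, i ≠ j → ∃ k, i.succ ∈ nodeComps k ∧ j.succ ∈ nodeComps k := by
        decide
      obtain ⟨k, hik, hjk⟩ := hmeet i j hij'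
      rw [← eval_comps1_nodes_eq_zero_iff, eval_comps1_succ] at hik hjk
      rw [eval_comps1_succ] at hi
      exact ⟨k, Projectivization.mk_eq_mk_of_dotProduct_eq_zero
        (lineCoeffs_crossProduct_ne_zero hij') hv (nodes_ne_zero k) hi hj hik hjk⟩

theorem exists_node_eq_of_two_le_mult1 {p : Projectivization ℂ (Fin 3 → ℂ)} (hp : 2 ≤ mult1 p) :
    ∃ k, p = node k := by
  obtain ⟨i, hi, j, hj, hij⟩ := Finset.one_lt_card.1 hp
  rw [Finset.mem_filter] at hi hj
  rw [← p.mk_rep]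
  exact exists_node_eq_mk p.rep_nonzero hij hi.2 hj.2

theorem ncard_setOf_mult1_eq {m : ℕ} (hm : 2 ≤ m) :
    {p | mult1 p = m}.ncard = {k | #(nodeComps k) = m}.ncard := by
  have : {p | mult1 p = m} = node '' {k | #(nodeComps k) = m} := by
    ext p
    constructor
    · intro hp
      obtain ⟨k, rfl⟩ := exists_node_eq_of_two_le_mult1 (hm.trans_eq hp.symm)
      exact ⟨k, (mult1_node k).symm.trans hp, rfl⟩
    · rintro ⟨k, hk, rfl⟩
      exact (mult1_node k).trans hk
  rw [this, Set.ncard_image_of_injective _ node_injective]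

theorem linearIndependent_grad_comps1 {v : Fin 3 → ℂ} (hv : v ≠ 0) {i j : Fin 7} (hij : i ≠ j)
    (hi : eval v (comps1 i) = 0) (hj : eval v (comps1 j) = 0) :
    LinearIndependent ℂ ![grad (comps1 i) v, grad (comps1 j) v] := by
  wlog hlt : i < j generalizing i j
  · exact LinearIndependent.pair_symm_iff.1
      (this hij.symm hj hi (lt_of_le_of_ne (not_lt.1 hlt) hij.symm))
  induction j using Fin.cases with
  | zero => exact absurd hlt (Fin.not_lt_zero i)
  | succ j =>
    rw [grad_comps1_succ]
    induction i using Fin.cases with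
    | zero =>
      obtain ⟨k, l, hsec⟩ := exists_isSecantLine_lineCoeffs j
      rw [eval_comps1_succ] at hj
      rcases hsec.polar_ne_zero_or hv hj with h | h
      · exact linearIndependent_pair_of_dotProduct hsec.ne_zero
          (by rwa [grad_comps1_zero_dotProduct]) hsec.dotProduct_left
      · exact linearIndependent_pair_of_dotProduct hsec.ne_zero
          (by rwa [grad_comps1_zero_dotProduct]) hsec.dotProduct_right
    | succ i =>
      rw [grad_comps1_succ, ← crossProduct_ne_zero_iff_linearIndependent]
      exact lineCoeffs_crossProduct_ne_zero fun h => hij (congrArg Fin.succ h)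

/-- CL1 has exactly 6 ordinary double points, 3 ordinary triple points, 2 ordinary
quadruple points, and no singular point of multiplicity at least 5; moreover any two
components meet transversally at every common point. -/
theorem stmt_12 :
    {p : Projectivization ℂ (Fin 3 → ℂ) | mult1 p = 2}.ncard = 6 ∧
    {p : Projectivization ℂ (Fin 3 → ℂ) | mult1 p = 3}.ncard = 3 ∧
    {p : Projectivization ℂ (Fin 3 → ℂ) | mult1 p = 4}.ncard = 2 ∧
    (∀ p : Projectivization ℂ (Fin 3 → ℂ), mult1 p ≤ 4) ∧
    (∀ p : Projectivization ℂ (Fin 3 → ℂ), ∀ i j : Fin 7, i ≠ j →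
      eval p.rep (comps1 i) = 0 → eval p.rep (comps1 j) = 0 →
      LinearIndependent ℂ ![grad (comps1 i) p.rep, grad (comps1 j) p.rep]) := by
  refine ⟨?_, ?_, ?_, fun p => ?_, fun p i j hij hi hj => ?_⟩
  · rw [ncard_setOf_mult1_eq le_rfl, Set.ncard_eq_toFinset_card']; decide
  · rw [ncard_setOf_mult1_eq (by norm_num), Set.ncard_eq_toFinset_card']; decide
  · rw [ncard_setOf_mult1_eq (by norm_num), Set.ncard_eq_toFinset_card']; decide
  · rcases lt_or_ge (mult1 p) 2 with hp | hp
    · omega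
    · obtain ⟨k, rfl⟩ := exists_node_eq_of_two_le_mult1 hp
      rw [mult1_node]
      exact (by decide : ∀ k, #(nodeComps k) ≤ 4) k
  · exact linearIndependent_grad_comps1 p.rep_nonzero hij hi hj
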